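/- arXiv:2001.03441 — 12 statements merged into one kernel-verified Lean document; each statement's English description precedes it below -/
import Mathlib

section
/- The closed unit interval [0,1] together with the ternary operation p(a,b,c) = (1-b)a + bc = a + bc - ba and the constants 0, 1/2, 1 is a mobi algebra; in particular p(a,b,c) ∈ [0,1] whenever a,b,c ∈ [0,1], and all eight mobi algebra axioms hold. -/
/-! `p(a, b, c) = (1 - b) a + b c` is the point at parameter `b` on the line from `a` to `c`, so for
`b ∈ [0, 1]` it is a convex combination of `a` and `c` and stays in `[0, 1]`. Axioms (A2)–(A5), (A7)
and (A8) are polynomial identities valid in every commutative ring, while (A1) and (A6) only need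
`2` to be invertible. -/

/-- A mobi algebra: a set `A` with a ternary operation `p` and constants `e0`, `eh`, `e1`
satisfying axioms (A1)–(A8). -/
structure MobiAlgebra (A : Type*) where
  p : A → A → A → A
  e0 : A
  eh : A
  e1 : A
  ax1 : p e1 eh e0 = eh
  ax2 : ∀ a, p e0 a e1 = a
  ax3 : ∀ a b, p a b a = a
  ax4 : ∀ a b, p a e0 b = a
  ax5 : ∀ a b, p a e1 b = b
  ax6 : ∀ a b₁ b₂, p a eh b₁ = p a eh b₂ → b₁ = b₂
  ax7 : ∀ a b c₁ c₂ c₃, p a (p c₁ c₂ c₃) b = p (p a c₁ b) c₂ (p a c₃ b)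
  ax8 : ∀ a₁ a₂ b₁ b₂ c, p (p a₁ c b₁) eh (p a₂ c b₂) = p (p a₁ eh a₂) c (p b₁ eh b₂)

/-- An `A`-mobi space over a mobi algebra `M` on `A`: a set `X` with `q : X × A × X → X`
satisfying axioms (X1)–(X5). -/
structure MobiSpace {A : Type*} (M : MobiAlgebra A) (X : Type*) where
  q : X → A → X → X
  sx1 : ∀ x y, q x M.e0 y = x
  sx2 : ∀ x y, q x M.e1 y = y
  sx3 : ∀ x a, q x a x = x
  sx4 : ∀ x y₁ y₂, q x M.eh y₁ = q x M.eh y₂ → y₁ = y₂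
  sx5 : ∀ x y a b c, q (q x a y) b (q x c y) = q x (M.p a b c) y

def MobiAlgebra.ofAffineCombClosed {K : Type*} [Field K] [NeZero (2 : K)] (S : Set K)
    (h0 : (0 : K) ∈ S) (hhalf : (2⁻¹ : K) ∈ S) (h1 : (1 : K) ∈ S)
    (hS : ∀ a ∈ S, ∀ b ∈ S, ∀ c ∈ S, (1 - b) * a + b * c ∈ S) : MobiAlgebra S where
  p a b c := ⟨(1 - b) * a + b * c, hS a a.2 b b.2 c c.2⟩
  e0 := ⟨0, h0⟩
  eh := ⟨2⁻¹, hhalf⟩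
  e1 := ⟨1, h1⟩
  ax1 := Subtype.ext <| by
    linear_combination -(mul_inv_cancel₀ (two_ne_zero : (2 : K) ≠ 0))
  ax2 _ := Subtype.ext <| by simp
  ax3 _ _ := Subtype.ext <| by dsimp only; ring
  ax4 _ _ := Subtype.ext <| by simp
  ax5 _ _ := Subtype.ext <| by simp
  ax6 _ _ _ h := Subtype.ext <| by
    simpa [two_ne_zero] using congrArg Subtype.val h
  ax7 _ _ _ _ _ := Subtype.ext <| by dsimp only; ring
  ax8 _ _ _ _ _ := Subtype.ext <| by dsimp only; ring

theorem one_sub_mul_add_mul_mem_Icc {K : Type*} [Ring K] [PartialOrder K] [IsOrderedRing K]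
    {a b c : K} (ha : a ∈ Set.Icc (0 : K) 1) (hb : b ∈ Set.Icc (0 : K) 1)
    (hc : c ∈ Set.Icc (0 : K) 1) : (1 - b) * a + b * c ∈ Set.Icc (0 : K) 1 :=
  convex_Icc (0 : K) 1 ha hc (sub_nonneg.2 hb.2) hb.1 (sub_add_cancel 1 b)

/-- The closed unit interval `[0,1]` with `p(a,b,c) = (1-b)a + bc` and constants
`0`, `1/2`, `1` is a mobi algebra; in particular `p(a,b,c) ∈ [0,1]` whenever `a,b,c ∈ [0,1]`. -/
theorem unitInterval_isMobiAlgebra :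
    (∀ a b c : ℝ, a ∈ Set.Icc (0:ℝ) 1 → b ∈ Set.Icc (0:ℝ) 1 → c ∈ Set.Icc (0:ℝ) 1 →
      (1 - b) * a + b * c ∈ Set.Icc (0:ℝ) 1) ∧
    ∃ M : MobiAlgebra (Set.Icc (0:ℝ) 1),
      (∀ a b c : Set.Icc (0:ℝ) 1, (M.p a b c : ℝ) = (1 - (b:ℝ)) * (a:ℝ) + (b:ℝ) * (c:ℝ)) ∧
      (M.e0 : ℝ) = 0 ∧ (M.eh : ℝ) = 1/2 ∧ (M.e1 : ℝ) = 1 := by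
  have hclosed : ∀ a ∈ Set.Icc (0 : ℝ) 1, ∀ b ∈ Set.Icc (0 : ℝ) 1, ∀ c ∈ Set.Icc (0 : ℝ) 1,
      (1 - b) * a + b * c ∈ Set.Icc (0 : ℝ) 1 :=
    fun _ ha _ hb _ hc => one_sub_mul_add_mul_mem_Icc ha hb hc
  refine ⟨fun a b c ha hb hc => hclosed a ha b hb c hc,
    MobiAlgebra.ofAffineCombClosed (Set.Icc (0 : ℝ) 1) (by norm_num) (by norm_num) (by norm_num)
      hclosed,
    fun _ _ _ => rfl, rfl, (one_div 2).symm, rfl⟩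
end

section
/- Let (X,⊕) be a non-empty midpoint algebra and e ∈ X a fixed element. Then the system (End_e^⊕(X), 𝕡, 𝟘, 𝟙/𝟚, 𝟙), where for f,g,h ∈ End_e^⊕(X) the map 𝕡_{f,g,h} is defined by 𝕡_{f,g,h}(x) = g̃(f(x),h(x)), and 𝟘(x) = e, (𝟙/𝟚)(x) = e ⊕ x, 𝟙(x) = x, is a mobi algebra; in particular 𝕡_{f,g,h} again belongs to End_e^⊕(X). -/
/-- `g : X → X` belongs to `End_e^⊕(X)`: it preserves midpoints, fixes `e`, and the elements
`ḡ(x)` (condition (iii)) and `g̃(x,y)` (condition (iv)) exist. -/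
def IsMobiEnd {X : Type*} (op : X → X → X) (e : X) (g : X → X) : Prop :=
  (∀ x y, g (op x y) = op (g x) (g y)) ∧
  (g e = e) ∧
  (∀ x, ∃ w, op w (g x) = op e x) ∧
  (∀ x y, ∃ z w, op w (g x) = op e x ∧ op w (g y) = op e z)

/-!
For `g ∈ End_e^⊕(X)` the element `g̃(a, b)` is characterised by `e ⊕ g̃(a, b) = ḡ(a) ⊕ g(b)`.
By mediality `ḡ` is a midpoint homomorphism, hence so is `(a, b) ↦ g̃(a, b)`, and moreover
`g̃(a, a) = a` and `g̃(e, b) = g(b)`. For `𝟘`, `𝟙/𝟚` and `𝟙` the map `g̃` is the first projection,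
`⊕` and the second projection, and the `g̃` of `𝕡_{f,g,h}` is `g̃(f̃, h̃)`. Every mobi axiom then
holds pointwise by one of these identities.
-/

structure IsMidpointAlgebra {X : Type*} (op : X → X → X) : Prop where
  idem : ∀ x, op x x = x
  comm : ∀ x y, op x y = op y x
  cancel : ∀ x x' y, op x y = op x' y → x = x'
  medial : ∀ x y z w, op (op x y) (op z w) = op (op x z) (op y w)

section

variable {X : Type*} {op : X → X → X} {e : X}

namespace IsMidpointAlgebra

theorem cancel_left (hX : IsMidpointAlgebra op) {z x y : X} (h : op z x = op z y) : x = y :=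
  hX.cancel x y z (by rw [hX.comm x, hX.comm y, h])

theorem left_distrib (hX : IsMidpointAlgebra op) (a b c : X) :
    op a (op b c) = op (op a b) (op a c) := by
  rw [hX.medial, hX.idem]

end IsMidpointAlgebra

abbrev MobiEnd (op : X → X → X) (e : X) : Type _ := {g : X → X // IsMobiEnd op e g}

namespace MobiEnd

theorem ext {f g : MobiEnd op e} (h : ∀ x, f.1 x = g.1 x) : f = g :=
  Subtype.ext (funext h)

theorem map_op (g : MobiEnd op e) (x y : X) : g.1 (op x y) = op (g.1 x) (g.1 y) :=
  g.2.1 x y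

theorem map_e (g : MobiEnd op e) : g.1 e = e :=
  g.2.2.1

/-- `ḡ(x)`. -/
noncomputable def bar (g : MobiEnd op e) (x : X) : X :=
  (g.2.2.2.1 x).choose

theorem bar_spec (g : MobiEnd op e) (x : X) : op (g.bar x) (g.1 x) = op e x :=
  (g.2.2.2.1 x).choose_spec

theorem eq_bar (hX : IsMidpointAlgebra op) {g : MobiEnd op e} {x w : X}
    (h : op w (g.1 x) = op e x) : w = g.bar x :=
  hX.cancel _ _ _ (h.trans (g.bar_spec x).symm)

/-- `g̃(a, b)`. -/
noncomputable def tilde (g : MobiEnd op e) (a b : X) : X :=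
  (g.2.2.2.2 a b).choose

theorem tilde_spec (hX : IsMidpointAlgebra op) (g : MobiEnd op e) (a b : X) :
    op (g.bar a) (g.1 b) = op e (g.tilde a b) := by
  obtain ⟨hwa, hwb⟩ := (g.2.2.2.2 a b).choose_spec.choose_spec
  rwa [← eq_bar hX hwa]

theorem eq_tilde (hX : IsMidpointAlgebra op) {g : MobiEnd op e} {a b z : X}
    (h : op (g.bar a) (g.1 b) = op e z) : z = g.tilde a b :=
  hX.cancel_left (h.symm.trans (g.tilde_spec hX a b))

theorem bar_op (hX : IsMidpointAlgebra op) (g : MobiEnd op e) (x y : X) :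
    g.bar (op x y) = op (g.bar x) (g.bar y) :=
  (eq_bar hX <| by
    rw [g.map_op, hX.medial, g.bar_spec x, g.bar_spec y, ← hX.left_distrib]).symm

theorem bar_e (hX : IsMidpointAlgebra op) (g : MobiEnd op e) : g.bar e = e :=
  (eq_bar hX <| by rw [g.map_e]).symm

theorem tilde_self (hX : IsMidpointAlgebra op) (g : MobiEnd op e) (a : X) : g.tilde a a = a :=
  (eq_tilde hX (g.bar_spec a)).symm

theorem tilde_e_left (hX : IsMidpointAlgebra op) (g : MobiEnd op e) (b : X) :
    g.tilde e b = g.1 b :=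
  (eq_tilde hX <| by rw [g.bar_e hX]).symm

theorem tilde_op (hX : IsMidpointAlgebra op) (g : MobiEnd op e) (a a' b b' : X) :
    g.tilde (op a a') (op b b') = op (g.tilde a b) (g.tilde a' b') :=
  (eq_tilde hX <| by
    rw [g.bar_op hX, g.map_op, hX.medial, tilde_spec hX, tilde_spec hX, ← hX.left_distrib]).symm

theorem tilde_op_e_op_e (hX : IsMidpointAlgebra op) (g : MobiEnd op e) (a b : X) :
    g.tilde (op e a) (op e b) = op e (g.tilde a b) := by
  rw [g.tilde_op hX, g.tilde_self hX]

/-- `𝟘`. -/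
def zero (hX : IsMidpointAlgebra op) : MobiEnd op e :=
  ⟨fun _ => e, fun _ _ => (hX.idem e).symm, rfl, fun x => ⟨x, hX.comm x e⟩,
    fun x _ => ⟨x, x, hX.comm x e, hX.comm x e⟩⟩

/-- `𝟙/𝟚`. -/
def half (hX : IsMidpointAlgebra op) : MobiEnd op e :=
  ⟨op e, hX.left_distrib e, hX.idem e, fun x => ⟨op e x, hX.idem _⟩,
    fun x y => ⟨op x y, op e x, hX.idem _, (hX.left_distrib e x y).symm⟩⟩

/-- `𝟙`. -/
def one : MobiEnd op e :=
  ⟨id, fun _ _ => rfl, rfl, fun _ => ⟨e, rfl⟩, fun _ y => ⟨y, e, rfl, rfl⟩⟩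

theorem tilde_zero (hX : IsMidpointAlgebra op) (a b : X) :
    (zero hX : MobiEnd op e).tilde a b = a := by
  have hbar : (zero hX : MobiEnd op e).bar a = a := (eq_bar hX (hX.comm a e)).symm
  exact (eq_tilde hX <| by rw [hbar]; exact hX.comm a e).symm

theorem tilde_half (hX : IsMidpointAlgebra op) (a b : X) :
    (half hX : MobiEnd op e).tilde a b = op a b := by
  have hbar : (half hX : MobiEnd op e).bar a = op e a := (eq_bar hX (hX.idem _)).symm
  exact (eq_tilde hX <| by rw [hbar]; exact (hX.left_distrib e a b).symm).symm

theorem tilde_one (hX : IsMidpointAlgebra op) (a b : X) : (one : MobiEnd op e).tilde a b = b := by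
  have hbar : (one : MobiEnd op e).bar a = e := (eq_bar hX rfl).symm
  exact (eq_tilde hX <| by rw [hbar]; rfl).symm

theorem op_tilde_bar_tilde (hX : IsMidpointAlgebra op) (f g h : MobiEnd op e) (x y : X) :
    op (g.tilde (f.bar x) (h.bar x)) (g.tilde (f.1 y) (h.1 y))
      = op e (g.tilde (f.tilde x y) (h.tilde x y)) := by
  rw [← g.tilde_op hX, tilde_spec hX, tilde_spec hX, g.tilde_op_e_op_e hX]

theorem op_tilde_bar_tilde_self (hX : IsMidpointAlgebra op) (f g h : MobiEnd op e) (x : X) :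
    op (g.tilde (f.bar x) (h.bar x)) (g.tilde (f.1 x) (h.1 x)) = op e x := by
  rw [op_tilde_bar_tilde hX, f.tilde_self hX, h.tilde_self hX, g.tilde_self hX]

/-- `𝕡_{f,g,h}`. -/
noncomputable def pointwiseTilde (hX : IsMidpointAlgebra op) (f g h : MobiEnd op e) :
    MobiEnd op e :=
  ⟨fun x => g.tilde (f.1 x) (h.1 x),
    fun x y => by simp only [f.map_op, h.map_op, g.tilde_op hX],
    by simp only [f.map_e, h.map_e, g.tilde_self hX],
    fun x => ⟨_, op_tilde_bar_tilde_self hX f g h x⟩,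
    fun x y => ⟨_, _, op_tilde_bar_tilde_self hX f g h x, op_tilde_bar_tilde hX f g h x y⟩⟩

theorem pointwiseTilde_apply (hX : IsMidpointAlgebra op) (f g h : MobiEnd op e) (x : X) :
    (pointwiseTilde hX f g h).1 x = g.tilde (f.1 x) (h.1 x) :=
  rfl

theorem bar_pointwiseTilde (hX : IsMidpointAlgebra op) (f g h : MobiEnd op e) (x : X) :
    (pointwiseTilde hX f g h).bar x = g.tilde (f.bar x) (h.bar x) :=
  (eq_bar hX (op_tilde_bar_tilde_self hX f g h x)).symm

theorem tilde_pointwiseTilde (hX : IsMidpointAlgebra op) (f g h : MobiEnd op e) (x y : X) :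
    (pointwiseTilde hX f g h).tilde x y = g.tilde (f.tilde x y) (h.tilde x y) :=
  (eq_tilde hX <| by rw [bar_pointwiseTilde]; exact op_tilde_bar_tilde hX f g h x y).symm

noncomputable def mobiAlgebra (hX : IsMidpointAlgebra op) : MobiAlgebra (MobiEnd op e) where
  p := pointwiseTilde hX
  e0 := zero hX
  eh := half hX
  e1 := one
  ax1 := ext fun x => (tilde_half hX x e).trans (hX.comm x e)
  ax2 a := ext fun x => a.tilde_e_left hX x
  ax3 a b := ext fun x => b.tilde_self hX (a.1 x)
  ax4 a b := ext fun x => tilde_zero hX (a.1 x) (b.1 x)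
  ax5 a b := ext fun x => tilde_one hX (a.1 x) (b.1 x)
  ax6 a b₁ b₂ h := ext fun x => hX.cancel_left (z := a.1 x) <| by
    simpa only [pointwiseTilde_apply, tilde_half] using congrArg (·.1 x) h
  ax7 a b c₁ c₂ c₃ := ext fun x => tilde_pointwiseTilde hX c₁ c₂ c₃ (a.1 x) (b.1 x)
  ax8 a₁ a₂ b₁ b₂ c := ext fun x => by
    simp only [pointwiseTilde_apply, tilde_half, c.tilde_op hX]

end MobiEnd

end

/-- For a non-empty midpoint algebra `(X,⊕)` with a fixed element `e ∈ X`, the set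
`End_e^⊕(X)` carries a mobi algebra structure with `𝕡_{f,g,h}(x) = g̃(f(x), h(x))`,
`𝟘(x) = e`, `(𝟙/𝟚)(x) = e ⊕ x` and `𝟙(x) = x`.  Here `𝕡_{f,g,h}(x)` is characterised by
`ḡ(f(x)) ⊕ g(h(x)) = e ⊕ 𝕡_{f,g,h}(x)`, where `w = ḡ(f(x))` is the (unique) element with
`w ⊕ g(f(x)) = e ⊕ f(x)`. -/
theorem endMidpoint_isMobiAlgebra {X : Type*} (op : X → X → X) (e : X)
    (hidem : ∀ x, op x x = x)
    (hcomm : ∀ x y, op x y = op y x)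
    (hcancel : ∀ x x' y, op x y = op x' y → x = x')
    (hmedial : ∀ x y z w, op (op x y) (op z w) = op (op x z) (op y w)) :
    ∃ M : MobiAlgebra {g : X → X // IsMobiEnd op e g},
      (∀ f g h : {g : X → X // IsMobiEnd op e g}, ∀ x : X,
        ∃ w, op w (g.1 (f.1 x)) = op e (f.1 x) ∧
             op w (g.1 (h.1 x)) = op e ((M.p f g h).1 x)) ∧
      (∀ x, (M.e0).1 x = e) ∧
      (∀ x, (M.eh).1 x = op e x) ∧
      (∀ x, (M.e1).1 x = x) := by
  have hX : IsMidpointAlgebra op := ⟨hidem, hcomm, hcancel, hmedial⟩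
  refine ⟨MobiEnd.mobiAlgebra hX, fun f g h x => ⟨MobiEnd.bar g (f.1 x), ?_, ?_⟩,
    fun _ => rfl, fun _ => rfl, fun _ => rfl⟩
  · exact MobiEnd.bar_spec g (f.1 x)
  · exact MobiEnd.tilde_spec hX g (f.1 x) (h.1 x)
end

section
/- Let (X,+,0) be an abelian group in which the endomorphism x ↦ x + x is bijective, with inverse written x ↦ x/2. Then the system (End(X), 𝕡, 𝟘, 𝟙/𝟚, 𝟙), where End(X) is the set of group endomorphisms of X, 𝕡_{f,g,h}(x) = f(x) - g(f(x)) + g(h(x)), 𝟘(x) = 0, (𝟙/𝟚)(x) = x/2, and 𝟙(x) = x, is a mobi algebra. -/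
/-! `AddMonoid.End X` is a ring, and bijectivity of `x ↦ x + x` says exactly that `2` is invertible
in it. In any ring with `⅟2`, the operation `p a b c = a - b * a + b * c` satisfies (A6) by cancelling
`⅟2`, (A8) because `⅟2`, the inverse of a central element, is central, and the other axioms as
ring identities. -/

namespace MobiAlgebra

variable (R : Type*) [Ring R] [Invertible (2 : R)]

def ofInvertibleTwo : MobiAlgebra R where
  p a b c := a - b * a + b * c
  e0 := 0
  eh := ⅟2
  e1 := 1
  ax1 := by rw [mul_one, mul_zero, add_zero, ← invOf_two_add_invOf_two]; abel
  ax2 a := by simp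
  ax3 a b := by simp
  ax4 a b := by simp
  ax5 a b := by simp
  ax6 a b₁ b₂ h := by
    have : ⅟2 * b₁ = ⅟2 * b₂ := add_left_cancel h
    rw [← mul_invOf_cancel_left (2 : R) b₁, this, mul_invOf_cancel_left]
  ax7 a b c₁ c₂ c₃ := by noncomm_ring
  ax8 a₁ a₂ b₁ b₂ c := by
    have hc : c * ⅟2 = ⅟2 * c := ((Commute.ofNat_left 2 c).invOf_left).eq.symm
    noncomm_ring
    simp only [← mul_assoc, hc]
    abel

end MobiAlgebra

noncomputable abbrev AddMonoid.End.invertibleOfBijective {M : Type*} [AddZeroClass M]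
    (f : AddMonoid.End M) (hf : Function.Bijective f) : Invertible f where
  invOf := (AddEquiv.ofBijective f hf).symm.toAddMonoidHom
  invOf_mul_self := AddMonoidHom.ext (AddEquiv.ofBijective f hf).symm_apply_apply
  mul_invOf_self := AddMonoidHom.ext (AddEquiv.ofBijective f hf).apply_symm_apply

/-- If `(X,+,0)` is an abelian group in which `x ↦ x + x` is bijective (with inverse
`x ↦ x/2`), then the set `End(X)` of group endomorphisms of `X` is a mobi algebra with
`𝕡_{f,g,h}(x) = f(x) - g(f(x)) + g(h(x))`, `𝟘(x) = 0`, `(𝟙/𝟚)(x) = x/2` and `𝟙(x) = x`. -/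
theorem endAddGroup_isMobiAlgebra {X : Type*} [AddCommGroup X]
    (hdouble : Function.Bijective fun x : X => x + x) :
    ∃ M : MobiAlgebra (AddMonoid.End X),
      (∀ f g h : AddMonoid.End X, ∀ x : X, M.p f g h x = f x - g (f x) + g (h x)) ∧
      (∀ x : X, M.e0 x = 0) ∧
      (∀ x : X, M.eh x + M.eh x = x) ∧
      (∀ x : X, M.e1 x = x) := by
  have htwo : ⇑(2 : AddMonoid.End X) = fun x => x + x := by
    ext x; simp [two_nsmul]
  let _ := AddMonoid.End.invertibleOfBijective 2 (htwo ▸ hdouble)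
  refine ⟨MobiAlgebra.ofInvertibleTwo _, fun f g h x => rfl, fun x => rfl, fun x => ?_,
    fun x => rfl⟩
  exact DFunLike.congr_fun (invOf_two_add_invOf_two (R := AddMonoid.End X)) x
end

section
/- Let (A,p,0,½,1) be a mobi algebra and (X,q) an A-mobi space. Then for all x,y ∈ X and a ∈ A, q(q(x,a,y),½,q(y,a,x)) = q(x,½,y). -/
/-!
Reversing the endpoints of a segment replaces the parameter `a` by its complement
`1 - a := p(1,a,0)`, so by (X5) the left-hand side is `q(x, p(a,½,1-a), y)`; writing `a = p(0,a,1)`,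
axiom (A8) turns `p(a,½,1-a)` into `p(½,a,½) = ½`.
-/

namespace MobiAlgebra

variable {A : Type*} (M : MobiAlgebra A)

def compl (a : A) : A := M.p M.e1 a M.e0

theorem p_eh_compl (a : A) : M.p a M.eh (M.compl a) = M.eh :=
  calc M.p a M.eh (M.compl a)
      = M.p (M.p M.e0 a M.e1) M.eh (M.p M.e1 a M.e0) := by rw [M.ax2, compl]
    _ = M.p (M.p M.e0 M.eh M.e1) a (M.p M.e1 M.eh M.e0) := M.ax8 _ _ _ _ _
    _ = M.eh := by rw [M.ax2, M.ax1, M.ax3]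

end MobiAlgebra

namespace MobiSpace

variable {A X : Type*} {M : MobiAlgebra A} (S : MobiSpace M X)

theorem q_swap (x y : X) (a : A) : S.q y a x = S.q x (M.compl a) y := by
  rw [MobiAlgebra.compl, ← S.sx5, S.sx2, S.sx1]

end MobiSpace

/-- In an `A`-mobi space, `q(q(x,a,y),½,q(y,a,x)) = q(x,½,y)`. -/
theorem mobiSpace_midSym {A X : Type*} (M : MobiAlgebra A) (S : MobiSpace M X) :
    ∀ x y : X, ∀ a : A, S.q (S.q x a y) M.eh (S.q y a x) = S.q x M.eh y := by
  intro x y a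
  rw [S.q_swap x y a, S.sx5, M.p_eh_compl]
end

section
/- Let (A,p,0,½,1) be a mobi algebra and (X,q) an A-mobi space. Then for all x,y ∈ X and a ∈ A, q(x,½,q(x,a,y)) = q(x,a,q(x,½,y)). -/
theorem MobiAlgebra.p_e0_eh_comm {A : Type*} (M : MobiAlgebra A) (a : A) :
    M.p M.e0 M.eh a = M.p M.e0 a M.eh := by
  have h := M.ax8 M.e0 M.e0 M.e0 M.e1 a
  rwa [M.ax3, M.ax2, M.ax3, M.ax2] at h

theorem MobiSpace.q_q_same_left {A X : Type*} {M : MobiAlgebra A} (S : MobiSpace M X)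
    (x y : X) (a b : A) : S.q x a (S.q x b y) = S.q x (M.p M.e0 a b) y := by
  rw [← S.sx5, S.sx1]

/-- In an `A`-mobi space, `q(x,½,q(x,a,y)) = q(x,a,q(x,½,y))`. -/
theorem mobiSpace_halfComm {A X : Type*} (M : MobiAlgebra A) (S : MobiSpace M X) :
    ∀ x y : X, ∀ a : A, S.q x M.eh (S.q x a y) = S.q x a (S.q x M.eh y) := by
  intro x y a
  rw [S.q_q_same_left, S.q_q_same_left, M.p_e0_eh_comm]
end

section
/- Let (A,p,0,½,1) be a mobi algebra and (X,q) an A-mobi space. Then for all x,y ∈ X and a,b,c ∈ A, q(q(q(x,a,y),b,x),½,q(x,b,q(x,c,y))) = q(x,½,q(x,p(a,b,c),y)). -/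
/-! Every point occurring in the identity lies on the segment from `x` to `y`: writing
`x = q(x,0,y)` and applying (X5) turns both sides into points `q(x,d,y)`. The resulting
identity of parameters `p(p(a,b,0),½,p(0,b,c)) = p(0,½,p(a,b,c))` follows from the medial
law (A8) together with the commutativity of the midpoint `p(-,½,-)`. -/

namespace MobiAlgebra

variable {A : Type*} (M : MobiAlgebra A)

theorem p_eh_comm (u v : A) : M.p u M.eh v = M.p v M.eh u :=
  calc M.p u M.eh v = M.p u (M.p M.e1 M.eh M.e0) v := by rw [M.ax1]
    _ = M.p (M.p u M.e1 v) M.eh (M.p u M.e0 v) := M.ax7 ..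
    _ = M.p v M.eh u := by rw [M.ax5, M.ax4]

theorem p_e0_eh_p (a b c : A) :
    M.p M.e0 M.eh (M.p a b c) = M.p (M.p M.e0 M.eh a) b (M.p M.e0 M.eh c) := by
  conv_lhs => rw [← M.ax3 M.e0 b]
  exact M.ax8 ..

theorem p_p_e0_eh_p_e0 (a b c : A) :
    M.p (M.p a b M.e0) M.eh (M.p M.e0 b c) = M.p M.e0 M.eh (M.p a b c) := by
  rw [M.ax8, M.p_eh_comm a M.e0, M.p_e0_eh_p]

end MobiAlgebra

namespace MobiSpace

variable {A X : Type*} {M : MobiAlgebra A} (S : MobiSpace M X)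

theorem q_q_left (x y : X) (a b : A) : S.q (S.q x a y) b x = S.q x (M.p a b M.e0) y := by
  rw [← S.sx5, S.sx1]

theorem q_q_right (x y : X) (b c : A) : S.q x b (S.q x c y) = S.q x (M.p M.e0 b c) y := by
  rw [← S.sx5, S.sx1]

end MobiSpace

/-- In an `A`-mobi space,
`q(q(q(x,a,y),b,x),½,q(x,b,q(x,c,y))) = q(x,½,q(x,p(a,b,c),y))`. -/
theorem mobiSpace_Y8 {A X : Type*} (M : MobiAlgebra A) (S : MobiSpace M X) :
    ∀ x y : X, ∀ a b c : A,
      S.q (S.q (S.q x a y) b x) M.eh (S.q x b (S.q x c y)) =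
        S.q x M.eh (S.q x (M.p a b c) y) := by
  intro x y a b c
  rw [S.q_q_left, S.q_q_right, S.q_q_right, S.sx5, M.p_p_e0_eh_p_e0]
end

section
/- In the setting of the second-order initial value problem flow: suppose there is a unique map β : X×X → V such that π(x,β(x,y),1) = y for all x,y ∈ X. Then for every x ∈ X, y ∈ X, v ∈ V and s,t ∈ ℝ: (i) β(x,x) = 0; (ii) s·β(x,y) = β(x, π(x,β(x,y),s)); (iii) β(π(x,v,s), π(x,v,t)) = (t-s)·π'(x,v,s), where π'(x,v,s) denotes the derivative of the curve r ↦ π(x,v,r) at r = s. -/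
/-!
Uniqueness of solutions turns the two symmetries of the equation `f'' = g(f, f')` into identities
for the flow: time translation gives `π(x,v,s+t) = π(π(x,v,s), π'(x,v,s), t)`, and the quadratic
homogeneity of `g` makes `t ↦ π(x,v,λt)` a solution with initial velocity `λv`, so
`π(x,v,λt) = π(x,λv,t)`; the constant curve is the solution with velocity `0`. Each property of
`β` then exhibits a vector `w` with `π(x,w,1) = y`, and uniqueness of `β` forces `β(x,y) = w`.
-/

variable {E : Type*} [NormedAddCommGroup E] [NormedSpace ℝ E]

structure IsSecondOrderSolution (X : Set E) (V : Submodule ℝ E) (g : E → E → E)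
    (f f' : ℝ → E) : Prop where
  mem : ∀ t, f t ∈ X
  deriv_mem : ∀ t, f' t ∈ V
  hasDerivAt : ∀ t, HasDerivAt f (f' t) t
  hasDerivAt_deriv : ∀ t, HasDerivAt f' (g (f t) (f' t)) t

structure IsSecondOrderFlow (X : Set E) (V : Submodule ℝ E) (g : E → E → E)
    (pi pi' : E → E → ℝ → E) : Prop where
  isSolution : ∀ x ∈ X, ∀ v ∈ V, IsSecondOrderSolution X V g (pi x v) (pi' x v)
  apply_zero : ∀ x ∈ X, ∀ v ∈ V, pi x v 0 = x
  deriv_zero : ∀ x ∈ X, ∀ v ∈ V, pi' x v 0 = v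
  unique : ∀ x ∈ X, ∀ v ∈ V, ∀ f f' : ℝ → E, IsSecondOrderSolution X V g f f' →
    f 0 = x → f' 0 = v → ∀ t, f t = pi x v t

variable {X : Set E} {V : Submodule ℝ E} {g : E → E → E}

namespace IsSecondOrderSolution

variable {f f' : ℝ → E}

theorem const {x : E} (hx : x ∈ X) (hg : g x 0 = 0) :
    IsSecondOrderSolution X V g (fun _ ↦ x) (fun _ ↦ 0) where
  mem _ := hx
  deriv_mem _ := V.zero_mem
  hasDerivAt t := hasDerivAt_const t x
  hasDerivAt_deriv t := by rw [hg]; exact hasDerivAt_const t 0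

theorem comp_const_add (h : IsSecondOrderSolution X V g f f') (s : ℝ) :
    IsSecondOrderSolution X V g (fun t ↦ f (s + t)) (fun t ↦ f' (s + t)) where
  mem t := h.mem (s + t)
  deriv_mem t := h.deriv_mem (s + t)
  hasDerivAt t := .comp_const_add s t (h.hasDerivAt (s + t))
  hasDerivAt_deriv t := .comp_const_add s t (h.hasDerivAt_deriv (s + t))

theorem comp_const_mul (h : IsSecondOrderSolution X V g f f')
    (hg : ∀ x ∈ X, ∀ v ∈ V, ∀ lam : ℝ, g x (lam • v) = lam ^ 2 • g x v) (lam : ℝ) :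
    IsSecondOrderSolution X V g (fun t ↦ f (lam * t)) (fun t ↦ lam • f' (lam * t)) where
  mem t := h.mem (lam * t)
  deriv_mem t := V.smul_mem lam (h.deriv_mem (lam * t))
  hasDerivAt t := by
    simpa [Function.comp_def] using
      (h.hasDerivAt (lam * t)).scomp t ((hasDerivAt_id t).const_mul lam)
  hasDerivAt_deriv t := by
    rw [hg _ (h.mem _) _ (h.deriv_mem _), sq, ← smul_smul]
    simpa [Function.comp_def, Pi.smul_def] using
      ((h.hasDerivAt_deriv (lam * t)).scomp t ((hasDerivAt_id t).const_mul lam)).const_smul lam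

end IsSecondOrderSolution

namespace IsSecondOrderFlow

variable {pi pi' : E → E → ℝ → E}

theorem apply_zero_vec (hflow : IsSecondOrderFlow X V g pi pi')
    (hg : ∀ x ∈ X, ∀ v ∈ V, ∀ lam : ℝ, g x (lam • v) = lam ^ 2 • g x v)
    {x : E} (hx : x ∈ X) (t : ℝ) : pi x 0 t = x := by
  have hg0 : g x 0 = 0 := by simpa using hg x hx 0 V.zero_mem 0
  exact (hflow.unique x hx 0 V.zero_mem _ _ (.const hx hg0) rfl rfl t).symm

theorem apply_add (hflow : IsSecondOrderFlow X V g pi pi') {x v : E} (hx : x ∈ X) (hv : v ∈ V)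
    (s t : ℝ) : pi x v (s + t) = pi (pi x v s) (pi' x v s) t := by
  have hsol := hflow.isSolution x hx v hv
  exact hflow.unique _ (hsol.mem s) _ (hsol.deriv_mem s) _ _ (hsol.comp_const_add s)
    (by simp) (by simp) t

theorem apply_mul (hflow : IsSecondOrderFlow X V g pi pi')
    (hg : ∀ x ∈ X, ∀ v ∈ V, ∀ lam : ℝ, g x (lam • v) = lam ^ 2 • g x v)
    {x v : E} (hx : x ∈ X) (hv : v ∈ V) (lam t : ℝ) : pi x v (lam * t) = pi x (lam • v) t :=
  hflow.unique x hx _ (V.smul_mem lam hv) _ _ ((hflow.isSolution x hx v hv).comp_const_mul hg lam)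
    (by simp [hflow.apply_zero x hx v hv]) (by simp [hflow.deriv_zero x hx v hv]) t

end IsSecondOrderFlow

theorem eq_of_unique_of_apply_eq {α M : Type*} {X : Set α} {V : Set M} {P : α → M → α}
    {beta : α → α → M} (hβV : ∀ x ∈ X, ∀ y ∈ X, beta x y ∈ V)
    (hβ : ∀ x ∈ X, ∀ y ∈ X, P x (beta x y) = y)
    (hβuniq : ∀ beta' : α → α → M, (∀ x ∈ X, ∀ y ∈ X, beta' x y ∈ V) →
      (∀ x ∈ X, ∀ y ∈ X, P x (beta' x y) = y) → ∀ x ∈ X, ∀ y ∈ X, beta' x y = beta x y) :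
    ∀ x ∈ X, ∀ y ∈ X, ∀ w ∈ V, P x w = y → beta x y = w := by
  classical
  intro x hx y hy w hw hPw
  let beta' a b := if a = x ∧ b = y then w else beta a b
  have hV : ∀ a ∈ X, ∀ b ∈ X, beta' a b ∈ V := fun a ha b hb ↦ by
    by_cases hab : a = x ∧ b = y <;> simp [beta', hab, hw, hβV a ha b hb]
  have hP : ∀ a ∈ X, ∀ b ∈ X, P a (beta' a b) = b := fun a ha b hb ↦ by
    by_cases hab : a = x ∧ b = y
    · obtain ⟨rfl, rfl⟩ := hab
      simpa [beta'] using hPw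
    · simpa [beta', hab] using hβ a ha b hb
  simpa [beta'] using (hβuniq beta' hV hP x hx y hy).symm

theorem flow_beta_properties_general
    {n : ℕ} (X : Set (Fin n → ℝ))
    (V : Submodule ℝ (Fin n → ℝ))
    (g : (Fin n → ℝ) → (Fin n → ℝ) → (Fin n → ℝ))
    (hg : ∀ x ∈ X, ∀ v ∈ V, ∀ lam : ℝ, g x (lam • v) = lam ^ 2 • g x v)
    (pi pi' : (Fin n → ℝ) → (Fin n → ℝ) → ℝ → (Fin n → ℝ))
    (hπX : ∀ x ∈ X, ∀ v ∈ V, ∀ t : ℝ, pi x v t ∈ X)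
    (hπV : ∀ x ∈ X, ∀ v ∈ V, ∀ t : ℝ, pi' x v t ∈ V)
    (hπ0 : ∀ x ∈ X, ∀ v ∈ V, pi x v 0 = x)
    (hπ'0 : ∀ x ∈ X, ∀ v ∈ V, pi' x v 0 = v)
    (hπd : ∀ x ∈ X, ∀ v ∈ V, ∀ t : ℝ, HasDerivAt (pi x v) (pi' x v t) t)
    (hπd' : ∀ x ∈ X, ∀ v ∈ V, ∀ t : ℝ,
      HasDerivAt (pi' x v) (g (pi x v t) (pi' x v t)) t)
    (huniq : ∀ x ∈ X, ∀ v ∈ V, ∀ f f' : ℝ → (Fin n → ℝ),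
      (∀ t : ℝ, f t ∈ X) → (∀ t : ℝ, f' t ∈ V) →
      (∀ t : ℝ, HasDerivAt f (f' t) t) →
      (∀ t : ℝ, HasDerivAt f' (g (f t) (f' t)) t) →
      f 0 = x → f' 0 = v → ∀ t : ℝ, f t = pi x v t)
    (beta : (Fin n → ℝ) → (Fin n → ℝ) → (Fin n → ℝ))
    (hβV : ∀ x ∈ X, ∀ y ∈ X, beta x y ∈ V)
    (hβ : ∀ x ∈ X, ∀ y ∈ X, pi x (beta x y) 1 = y)
    (hβuniq : ∀ beta' : (Fin n → ℝ) → (Fin n → ℝ) → (Fin n → ℝ),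
      (∀ x ∈ X, ∀ y ∈ X, beta' x y ∈ V) →
      (∀ x ∈ X, ∀ y ∈ X, pi x (beta' x y) 1 = y) →
      ∀ x ∈ X, ∀ y ∈ X, beta' x y = beta x y)
    :
    (∀ x ∈ X, beta x x = 0) ∧
    (∀ x ∈ X, ∀ y ∈ X, ∀ s : ℝ, s • beta x y = beta x (pi x (beta x y) s)) ∧
    (∀ x ∈ X, ∀ v ∈ V, ∀ s t : ℝ,
      beta (pi x v s) (pi x v t) = (t - s) • pi' x v s) := by
  have hflow : IsSecondOrderFlow X V g pi pi' :=
    { isSolution := fun x hx v hv ↦ ⟨hπX x hx v hv, hπV x hx v hv, hπd x hx v hv, hπd' x hx v hv⟩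
      apply_zero := hπ0
      deriv_zero := hπ'0
      unique := fun x hx v hv f f' hf ↦ huniq x hx v hv f f' hf.1 hf.2 hf.3 hf.4 }
  have hβeq := eq_of_unique_of_apply_eq (P := fun x v ↦ pi x v 1) hβV hβ hβuniq
  refine ⟨fun x hx ↦ ?_, fun x hx y hy s ↦ ?_, fun x hx v hv s t ↦ ?_⟩
  · exact hβeq x hx x hx 0 V.zero_mem (hflow.apply_zero_vec hg hx 1)
  · have hb := hβV x hx y hy
    refine (hβeq x hx _ (hπX x hx _ hb s) _ (V.smul_mem s hb) ?_).symm
    rw [← hflow.apply_mul hg hx hb, mul_one]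
  · have hs := hπX x hx v hv s
    refine hβeq _ hs _ (hπX x hx v hv t) _ (V.smul_mem _ (hπV x hx v hv s)) ?_
    rw [← hflow.apply_mul hg hs (hπV x hx v hv s), mul_one, ← hflow.apply_add hx hv,
      add_sub_cancel]

/-- Lemma 3: if `β` is the unique map with `π(x,β(x,y),1) = y`, then
(i) `β(x,x) = 0`; (ii) `s·β(x,y) = β(x, π(x,β(x,y),s))`;
(iii) `β(π(x,v,s), π(x,v,t)) = (t-s)·π'(x,v,s)`. -/
theorem flow_beta_properties
    {n : ℕ} (X : Set (Fin n → ℝ)) (hX : IsOpen X)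
    (V : Submodule ℝ (Fin n → ℝ))
    (g : (Fin n → ℝ) → (Fin n → ℝ) → (Fin n → ℝ))
    (hg : ∀ x ∈ X, ∀ v ∈ V, ∀ lam : ℝ, g x (lam • v) = lam ^ 2 • g x v)
    (pi pi' : (Fin n → ℝ) → (Fin n → ℝ) → ℝ → (Fin n → ℝ))
    (hπX : ∀ x ∈ X, ∀ v ∈ V, ∀ t : ℝ, pi x v t ∈ X)
    (hπV : ∀ x ∈ X, ∀ v ∈ V, ∀ t : ℝ, pi' x v t ∈ V)
    (hπ0 : ∀ x ∈ X, ∀ v ∈ V, pi x v 0 = x)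
    (hπ'0 : ∀ x ∈ X, ∀ v ∈ V, pi' x v 0 = v)
    (hπd : ∀ x ∈ X, ∀ v ∈ V, ∀ t : ℝ, HasDerivAt (pi x v) (pi' x v t) t)
    (hπd' : ∀ x ∈ X, ∀ v ∈ V, ∀ t : ℝ,
      HasDerivAt (pi' x v) (g (pi x v t) (pi' x v t)) t)
    (huniq : ∀ x ∈ X, ∀ v ∈ V, ∀ f f' : ℝ → (Fin n → ℝ),
      (∀ t : ℝ, f t ∈ X) → (∀ t : ℝ, f' t ∈ V) →
      (∀ t : ℝ, HasDerivAt f (f' t) t) →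
      (∀ t : ℝ, HasDerivAt f' (g (f t) (f' t)) t) →
      f 0 = x → f' 0 = v → ∀ t : ℝ, f t = pi x v t)
    (beta : (Fin n → ℝ) → (Fin n → ℝ) → (Fin n → ℝ))
    (hβV : ∀ x ∈ X, ∀ y ∈ X, beta x y ∈ V)
    (hβ : ∀ x ∈ X, ∀ y ∈ X, pi x (beta x y) 1 = y)
    (hβuniq : ∀ beta' : (Fin n → ℝ) → (Fin n → ℝ) → (Fin n → ℝ),
      (∀ x ∈ X, ∀ y ∈ X, beta' x y ∈ V) →
      (∀ x ∈ X, ∀ y ∈ X, pi x (beta' x y) 1 = y) →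
      ∀ x ∈ X, ∀ y ∈ X, beta' x y = beta x y)
    :
    (∀ x ∈ X, beta x x = 0) ∧
    (∀ x ∈ X, ∀ y ∈ X, ∀ s : ℝ, s • beta x y = beta x (pi x (beta x y) s)) ∧
    (∀ x ∈ X, ∀ v ∈ V, ∀ s t : ℝ,
      beta (pi x v s) (pi x v t) = (t - s) • pi' x v s) :=
  flow_beta_properties_general X V g hg pi pi' hπX hπV hπ0 hπ'0 hπd hπd' huniq beta hβV hβ hβuniq
end

section
/- In the setting of the second-order initial value problem flow: suppose there is a unique map β : X×X → V such that π(x,β(x,y),1) = y for all x,y ∈ X. Then the pair (X,q), where q(x,t,y) = π(x,β(x,y),t) for t ∈ [0,1], is a mobi space over the mobi algebra ([0,1], p, 0, 1/2, 1) with p(s,u,t) = s + u(t-s); that is, q satisfies axioms (X1)–(X5). -/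
/-!
Write `exp x v = π(x,v,1)`. Uniqueness of `β` forces `β(x, exp x v) = v` for every `v ∈ V`,
since otherwise `β` could be changed at the single point `(x, exp x v)`. Uniqueness of solutions
gives the reparametrisation rules `π(x,λv,t) = π(x,v,λt)` (from the homogeneity of `g`) and
`π(π(x,v,s), π'(x,v,s), t) = π(x,v,s+t)`. Hence `q(x,t,exp x v) = π(x,v,t)`, and the segment of
the geodesic `t ↦ π(x,v,t)` from time `a` to time `c`, started at `π(x,v,a)`, has initial velocity
`(c-a)π'(x,v,a)`; rescaling it gives (X5). Axiom (X4) is injectivity of `v ↦ π(x,v,½) = exp x (½v)`.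
-/

theorem leftInvOn_of_forall_eq {α γ : Type*} {X : Set α} {V : Set γ} {exp : α → γ → α}
    {beta : α → α → γ} (hβV : ∀ x ∈ X, ∀ y ∈ X, beta x y ∈ V)
    (hβ : ∀ x ∈ X, ∀ y ∈ X, exp x (beta x y) = y)
    (hβuniq : ∀ beta' : α → α → γ, (∀ x ∈ X, ∀ y ∈ X, beta' x y ∈ V) →
      (∀ x ∈ X, ∀ y ∈ X, exp x (beta' x y) = y) → ∀ x ∈ X, ∀ y ∈ X, beta' x y = beta x y)
    {x : α} (hx : x ∈ X) (hexp : Set.MapsTo (exp x) V X) : Set.LeftInvOn (beta x) (exp x) V := by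
  classical
  intro w hw
  set beta' : α → α → γ := fun a b => if a = x ∧ b = exp x w then w else beta a b
  have hβ'V : ∀ a ∈ X, ∀ b ∈ X, beta' a b ∈ V := fun a ha b hb => by
    by_cases h : a = x ∧ b = exp x w
    · simpa [beta', h] using hw
    · simpa [beta', h] using hβV a ha b hb
  have hβ' : ∀ a ∈ X, ∀ b ∈ X, exp a (beta' a b) = b := fun a ha b hb => by
    by_cases h : a = x ∧ b = exp x w
    · obtain ⟨rfl, rfl⟩ := h
      simp [beta']
    · simpa [beta', h] using hβ a ha b hb
  simpa [beta'] using (hβuniq beta' hβ'V hβ' x hx (exp x w) (hexp hw)).symm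

section SecondOrderFlow

variable {E : Type*} [NormedAddCommGroup E] [NormedSpace ℝ E]
  {X : Set E} {V : Submodule ℝ E} {g : E → E → E}

variable (X V g) in
/-- `(f, f')` solves `f' = ḟ`, `ḟ' = g(f, f')` with position in `X` and velocity in `V`. -/
structure IsSolution (f f' : ℝ → E) : Prop where
  mem : ∀ t, f t ∈ X
  velocity_mem : ∀ t, f' t ∈ V
  hasDerivAt : ∀ t, HasDerivAt f (f' t) t
  hasDerivAt_velocity : ∀ t, HasDerivAt f' (g (f t) (f' t)) t

namespace IsSolution

variable {f f' : ℝ → E}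

theorem const {x : E} (hx : x ∈ X) (hg : g x 0 = 0) :
    IsSolution X V g (fun _ => x) (fun _ => 0) where
  mem _ := hx
  velocity_mem _ := V.zero_mem
  hasDerivAt t := hasDerivAt_const t x
  hasDerivAt_velocity t := by rw [hg]; exact hasDerivAt_const t 0

theorem comp_const_add (hf : IsSolution X V g f f') (s : ℝ) :
    IsSolution X V g (fun t => f (s + t)) (fun t => f' (s + t)) where
  mem t := hf.mem (s + t)
  velocity_mem t := hf.velocity_mem (s + t)
  hasDerivAt t := (hf.hasDerivAt (s + t)).comp_const_add s t
  hasDerivAt_velocity t := (hf.hasDerivAt_velocity (s + t)).comp_const_add s t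

theorem comp_const_mul (hf : IsSolution X V g f f')
    (hg : ∀ x ∈ X, ∀ v ∈ V, ∀ lam : ℝ, g x (lam • v) = lam ^ 2 • g x v) (lam : ℝ) :
    IsSolution X V g (fun t => f (lam * t)) (fun t => lam • f' (lam * t)) where
  mem t := hf.mem (lam * t)
  velocity_mem t := V.smul_mem lam (hf.velocity_mem (lam * t))
  hasDerivAt t := (hf.hasDerivAt (lam * t)).scomp t (hasDerivAt_const_mul lam)
  hasDerivAt_velocity t := by
    rw [hg _ (hf.mem _) _ (hf.velocity_mem _), sq, mul_smul]
    exact ((hf.hasDerivAt_velocity (lam * t)).scomp t (hasDerivAt_const_mul lam)).const_smul lam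

end IsSolution

variable (X V g) in
structure IsSecondOrderFlow_s14 (pi pi' : E → E → ℝ → E) : Prop where
  isSolution : ∀ x ∈ X, ∀ v ∈ V, IsSolution X V g (pi x v) (pi' x v)
  pi_time_zero : ∀ x ∈ X, ∀ v ∈ V, pi x v 0 = x
  pi'_time_zero : ∀ x ∈ X, ∀ v ∈ V, pi' x v 0 = v
  eq_pi : ∀ x ∈ X, ∀ v ∈ V, ∀ f f' : ℝ → E,
    IsSolution X V g f f' → f 0 = x → f' 0 = v → ∀ t, f t = pi x v t

namespace IsSecondOrderFlow_s14

variable {pi pi' : E → E → ℝ → E}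

theorem pi_zero_velocity (hflow : IsSecondOrderFlow_s14 X V g pi pi') {x : E} (hx : x ∈ X)
    (hg : g x 0 = 0) (t : ℝ) : pi x 0 t = x :=
  (hflow.eq_pi x hx 0 V.zero_mem _ _ (IsSolution.const hx hg) rfl rfl t).symm

theorem pi_smul (hflow : IsSecondOrderFlow_s14 X V g pi pi')
    (hg : ∀ x ∈ X, ∀ v ∈ V, ∀ lam : ℝ, g x (lam • v) = lam ^ 2 • g x v)
    {x v : E} (hx : x ∈ X) (hv : v ∈ V) (lam t : ℝ) : pi x (lam • v) t = pi x v (lam * t) :=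
  (hflow.eq_pi x hx _ (V.smul_mem lam hv) _ _ ((hflow.isSolution x hx v hv).comp_const_mul hg lam)
    (by simp [hflow.pi_time_zero x hx v hv]) (by simp [hflow.pi'_time_zero x hx v hv]) t).symm

theorem pi_shift (hflow : IsSecondOrderFlow_s14 X V g pi pi') {x v : E} (hx : x ∈ X) (hv : v ∈ V)
    (s t : ℝ) : pi (pi x v s) (pi' x v s) t = pi x v (s + t) := by
  have hsol := hflow.isSolution x hx v hv
  exact (hflow.eq_pi _ (hsol.mem s) _ (hsol.velocity_mem s) _ _ (hsol.comp_const_add s)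
    (by simp) (by simp) t).symm

theorem injOn_pi (hflow : IsSecondOrderFlow_s14 X V g pi pi')
    (hg : ∀ x ∈ X, ∀ v ∈ V, ∀ lam : ℝ, g x (lam • v) = lam ^ 2 • g x v)
    {x : E} (hx : x ∈ X) (hinj : Set.InjOn (fun v => pi x v 1) V) {t : ℝ} (ht : t ≠ 0) :
    Set.InjOn (fun v => pi x v t) V := by
  intro v₁ hv₁ v₂ hv₂ h
  have hpi : ∀ v ∈ V, pi x (t • v) 1 = pi x v t := fun v hv => by
    rw [hflow.pi_smul hg hx hv, mul_one]
  refine smul_right_injective E ht (hinj (V.smul_mem t hv₁) (V.smul_mem t hv₂) ?_)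
  simpa only [hpi v₁ hv₁, hpi v₂ hv₂] using h

theorem q_pi_pi (hflow : IsSecondOrderFlow_s14 X V g pi pi')
    (hg : ∀ x ∈ X, ∀ v ∈ V, ∀ lam : ℝ, g x (lam • v) = lam ^ 2 • g x v)
    {q : E → ℝ → E → E} (hq : ∀ x ∈ X, ∀ v ∈ V, ∀ t, q x t (pi x v 1) = pi x v t)
    {x v : E} (hx : x ∈ X) (hv : v ∈ V) (a b c : ℝ) :
    q (pi x v a) b (pi x v c) = pi x v (a + b * (c - a)) := by
  have hsol := hflow.isSolution x hx v hv
  have hc : pi x v c = pi (pi x v a) ((c - a) • pi' x v a) 1 := by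
    rw [hflow.pi_smul hg (hsol.mem a) (hsol.velocity_mem a), mul_one, hflow.pi_shift hx hv,
      add_sub_cancel]
  rw [hc, hq _ (hsol.mem a) _ (V.smul_mem _ (hsol.velocity_mem a)),
    hflow.pi_smul hg (hsol.mem a) (hsol.velocity_mem a), hflow.pi_shift hx hv, mul_comm]

end IsSecondOrderFlow_s14

end SecondOrderFlow

theorem flow_mobiSpace_general
    {n : ℕ} (X : Set (Fin n → ℝ))
    (V : Submodule ℝ (Fin n → ℝ))
    (g : (Fin n → ℝ) → (Fin n → ℝ) → (Fin n → ℝ))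
    (hg : ∀ x ∈ X, ∀ v ∈ V, ∀ lam : ℝ, g x (lam • v) = lam ^ 2 • g x v)
    (pi pi' : (Fin n → ℝ) → (Fin n → ℝ) → ℝ → (Fin n → ℝ))
    (hπX : ∀ x ∈ X, ∀ v ∈ V, ∀ t : ℝ, pi x v t ∈ X)
    (hπV : ∀ x ∈ X, ∀ v ∈ V, ∀ t : ℝ, pi' x v t ∈ V)
    (hπ0 : ∀ x ∈ X, ∀ v ∈ V, pi x v 0 = x)
    (hπ'0 : ∀ x ∈ X, ∀ v ∈ V, pi' x v 0 = v)
    (hπd : ∀ x ∈ X, ∀ v ∈ V, ∀ t : ℝ, HasDerivAt (pi x v) (pi' x v t) t)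
    (hπd' : ∀ x ∈ X, ∀ v ∈ V, ∀ t : ℝ,
      HasDerivAt (pi' x v) (g (pi x v t) (pi' x v t)) t)
    (huniq : ∀ x ∈ X, ∀ v ∈ V, ∀ f f' : ℝ → (Fin n → ℝ),
      (∀ t : ℝ, f t ∈ X) → (∀ t : ℝ, f' t ∈ V) →
      (∀ t : ℝ, HasDerivAt f (f' t) t) →
      (∀ t : ℝ, HasDerivAt f' (g (f t) (f' t)) t) →
      f 0 = x → f' 0 = v → ∀ t : ℝ, f t = pi x v t)
    (beta : (Fin n → ℝ) → (Fin n → ℝ) → (Fin n → ℝ))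
    (hβV : ∀ x ∈ X, ∀ y ∈ X, beta x y ∈ V)
    (hβ : ∀ x ∈ X, ∀ y ∈ X, pi x (beta x y) 1 = y)
    (hβuniq : ∀ beta' : (Fin n → ℝ) → (Fin n → ℝ) → (Fin n → ℝ),
      (∀ x ∈ X, ∀ y ∈ X, beta' x y ∈ V) →
      (∀ x ∈ X, ∀ y ∈ X, pi x (beta' x y) 1 = y) →
      ∀ x ∈ X, ∀ y ∈ X, beta' x y = beta x y)
    (q : (Fin n → ℝ) → ℝ → (Fin n → ℝ) → (Fin n → ℝ))
    (hq : ∀ x ∈ X, ∀ y ∈ X, ∀ t : ℝ, q x t y = pi x (beta x y) t) :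
    (∀ x ∈ X, ∀ y ∈ X, q x 0 y = x) ∧
    (∀ x ∈ X, ∀ y ∈ X, q x 1 y = y) ∧
    (∀ x ∈ X, ∀ a ∈ Set.Icc (0:ℝ) 1, q x a x = x) ∧
    (∀ x ∈ X, ∀ y₁ ∈ X, ∀ y₂ ∈ X, q x (1/2) y₁ = q x (1/2) y₂ → y₁ = y₂) ∧
    (∀ x ∈ X, ∀ y ∈ X, ∀ a ∈ Set.Icc (0:ℝ) 1, ∀ b ∈ Set.Icc (0:ℝ) 1,
      ∀ c ∈ Set.Icc (0:ℝ) 1,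
      q (q x a y) b (q x c y) = q x (a + b * (c - a)) y) := by
  have hflow : IsSecondOrderFlow_s14 X V g pi pi' :=
    ⟨fun x hx v hv => ⟨hπX x hx v hv, hπV x hx v hv, hπd x hx v hv, hπd' x hx v hv⟩, hπ0, hπ'0,
      fun x hx v hv f f' hf => huniq x hx v hv f f' hf.mem hf.velocity_mem hf.hasDerivAt
        hf.hasDerivAt_velocity⟩
  have hinv : ∀ x ∈ X, Set.LeftInvOn (beta x) (fun v => pi x v 1) V := fun x hx =>
    leftInvOn_of_forall_eq (exp := fun x v => pi x v 1) hβV hβ hβuniq hx fun v hv => hπX x hx v hv 1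
  have hq' : ∀ x ∈ X, ∀ v ∈ V, ∀ t, q x t (pi x v 1) = pi x v t := fun x hx v hv t => by
    rw [hq x hx _ (hπX x hx v hv 1), hinv x hx hv]
  refine ⟨fun x hx y hy => ?_, fun x hx y hy => ?_, fun x hx a _ => ?_,
    fun x hx y₁ hy₁ y₂ hy₂ h => ?_, fun x hx y hy a _ b _ c _ => ?_⟩
  · rw [hq x hx y hy, hπ0 x hx _ (hβV x hx y hy)]
  · rw [hq x hx y hy, hβ x hx y hy]
  · have hrest := hflow.pi_zero_velocity hx (by simpa using hg x hx 0 V.zero_mem 0)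
    calc q x a x = q x a (pi x 0 1) := by rw [hrest]
      _ = x := by rw [hq' x hx 0 V.zero_mem, hrest]
  · rw [hq x hx y₁ hy₁, hq x hx y₂ hy₂] at h
    have hβeq := hflow.injOn_pi hg hx (hinv x hx).injOn one_half_pos.ne'
      (hβV x hx y₁ hy₁) (hβV x hx y₂ hy₂) h
    exact (Set.LeftInvOn.injOn (f₁' := fun v => pi x v 1) fun y hy => hβ x hx y hy) hy₁ hy₂ hβeq
  · obtain ⟨v, hv, rfl⟩ : ∃ v ∈ V, pi x v 1 = y := ⟨beta x y, hβV x hx y hy, hβ x hx y hy⟩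
    rw [hq' x hx v hv, hq' x hx v hv, hq' x hx v hv, hflow.q_pi_pi hg hq' hx hv]

/-- Theorem 5.5: if `β` is the unique map with `π(x,β(x,y),1) = y`, then
`q(x,t,y) = π(x,β(x,y),t)` makes `X` a mobi space over the mobi algebra
`([0,1], p, 0, ½, 1)` with `p(s,u,t) = s + u(t-s)`; i.e. `q` satisfies (X1)–(X5). -/
theorem flow_mobiSpace
    {n : ℕ} (X : Set (Fin n → ℝ)) (hX : IsOpen X)
    (V : Submodule ℝ (Fin n → ℝ))
    (g : (Fin n → ℝ) → (Fin n → ℝ) → (Fin n → ℝ))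
    (hg : ∀ x ∈ X, ∀ v ∈ V, ∀ lam : ℝ, g x (lam • v) = lam ^ 2 • g x v)
    (pi pi' : (Fin n → ℝ) → (Fin n → ℝ) → ℝ → (Fin n → ℝ))
    (hπX : ∀ x ∈ X, ∀ v ∈ V, ∀ t : ℝ, pi x v t ∈ X)
    (hπV : ∀ x ∈ X, ∀ v ∈ V, ∀ t : ℝ, pi' x v t ∈ V)
    (hπ0 : ∀ x ∈ X, ∀ v ∈ V, pi x v 0 = x)
    (hπ'0 : ∀ x ∈ X, ∀ v ∈ V, pi' x v 0 = v)
    (hπd : ∀ x ∈ X, ∀ v ∈ V, ∀ t : ℝ, HasDerivAt (pi x v) (pi' x v t) t)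
    (hπd' : ∀ x ∈ X, ∀ v ∈ V, ∀ t : ℝ,
      HasDerivAt (pi' x v) (g (pi x v t) (pi' x v t)) t)
    (huniq : ∀ x ∈ X, ∀ v ∈ V, ∀ f f' : ℝ → (Fin n → ℝ),
      (∀ t : ℝ, f t ∈ X) → (∀ t : ℝ, f' t ∈ V) →
      (∀ t : ℝ, HasDerivAt f (f' t) t) →
      (∀ t : ℝ, HasDerivAt f' (g (f t) (f' t)) t) →
      f 0 = x → f' 0 = v → ∀ t : ℝ, f t = pi x v t)
    (beta : (Fin n → ℝ) → (Fin n → ℝ) → (Fin n → ℝ))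
    (hβV : ∀ x ∈ X, ∀ y ∈ X, beta x y ∈ V)
    (hβ : ∀ x ∈ X, ∀ y ∈ X, pi x (beta x y) 1 = y)
    (hβuniq : ∀ beta' : (Fin n → ℝ) → (Fin n → ℝ) → (Fin n → ℝ),
      (∀ x ∈ X, ∀ y ∈ X, beta' x y ∈ V) →
      (∀ x ∈ X, ∀ y ∈ X, pi x (beta' x y) 1 = y) →
      ∀ x ∈ X, ∀ y ∈ X, beta' x y = beta x y)
    (q : (Fin n → ℝ) → ℝ → (Fin n → ℝ) → (Fin n → ℝ))
    (hq : ∀ x ∈ X, ∀ y ∈ X, ∀ t : ℝ, q x t y = pi x (beta x y) t) :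
    (∀ x ∈ X, ∀ y ∈ X, q x 0 y = x) ∧
    (∀ x ∈ X, ∀ y ∈ X, q x 1 y = y) ∧
    (∀ x ∈ X, ∀ a ∈ Set.Icc (0:ℝ) 1, q x a x = x) ∧
    (∀ x ∈ X, ∀ y₁ ∈ X, ∀ y₂ ∈ X, q x (1/2) y₁ = q x (1/2) y₂ → y₁ = y₂) ∧
    (∀ x ∈ X, ∀ y ∈ X, ∀ a ∈ Set.Icc (0:ℝ) 1, ∀ b ∈ Set.Icc (0:ℝ) 1,
      ∀ c ∈ Set.Icc (0:ℝ) 1,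
      q (q x a y) b (q x c y) = q x (a + b * (c - a)) y) :=
  flow_mobiSpace_general X V g hg pi pi' hπX hπV hπ0 hπ'0 hπd hπd' huniq beta hβV hβ hβuniq q hq
end

section
/- Let (X,q) be a mobi space over a mobi algebra (A,p,0,½,1), and let h : X → S be a map onto a set S. Suppose there exist maps s : S → X and θ : S×S → X such that for all u,v,v' ∈ S and a₁,a₂,a₃ ∈ A: (1) h(s(u)) = u; (2) h(θ(u,v)) = v; (3) θ(u,u) = s(u); (4) h(q(s(u),½,θ(u,v))) = h(q(s(u),½,θ(u,v'))) implies v = v'; (5) h(q(s(u), p(a₁,a₂,a₃), θ(u,v))) = h(q(s(w), a₂, θ(w, h(q(s(u),a₃,θ(u,v)))))) where w = h(q(s(u),a₁,θ(u,v))). Then (S,q_S) with q_S(u,a,v) = h(q(s(u),a,θ(u,v))) is an A-mobi space. -/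
def MobiSpace.identification {A X S : Type*} {M : MobiAlgebra A} (Q : MobiSpace M X)
    (h : X → S) (s : S → X) (θ : S → S → X)
    (hs : ∀ u, h (s u) = u) (hθ : ∀ u v, h (θ u v) = v) (hθ_diag : ∀ u, θ u u = s u)
    (hcancel : ∀ u v v',
      h (Q.q (s u) M.eh (θ u v)) = h (Q.q (s u) M.eh (θ u v')) → v = v')
    (hcompat : ∀ u v a₁ a₂ a₃,
      h (Q.q (s u) (M.p a₁ a₂ a₃) (θ u v)) =
        h (Q.q (s (h (Q.q (s u) a₁ (θ u v)))) a₂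
            (θ (h (Q.q (s u) a₁ (θ u v))) (h (Q.q (s u) a₃ (θ u v)))))) :
    MobiSpace M S where
  q u a v := h (Q.q (s u) a (θ u v))
  sx1 u v := by rw [Q.sx1, hs]
  sx2 u v := by rw [Q.sx2, hθ]
  sx3 u a := by rw [hθ_diag, Q.sx3, hs]
  sx4 := hcancel
  sx5 u v a b c := (hcompat u v a b c).symm

theorem identification_mobiSpace_general {A X S : Type*} (M : MobiAlgebra A) (Q : MobiSpace M X)
    (h : X → S)
    (s : S → X) (θ : S → S → X)
    (h1 : ∀ u : S, h (s u) = u)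
    (h2 : ∀ u v : S, h (θ u v) = v)
    (h3 : ∀ u : S, θ u u = s u)
    (h4 : ∀ u v v' : S,
      h (Q.q (s u) M.eh (θ u v)) = h (Q.q (s u) M.eh (θ u v')) → v = v')
    (h5 : ∀ u v : S, ∀ a₁ a₂ a₃ : A,
      h (Q.q (s u) (M.p a₁ a₂ a₃) (θ u v)) =
        h (Q.q (s (h (Q.q (s u) a₁ (θ u v)))) a₂
            (θ (h (Q.q (s u) a₁ (θ u v))) (h (Q.q (s u) a₃ (θ u v)))))) :
    ∃ QS : MobiSpace M S,
      ∀ (u : S) (a : A) (v : S), QS.q u a v = h (Q.q (s u) a (θ u v)) :=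
  ⟨Q.identification h s θ h1 h2 h3 h4 h5, fun _ _ _ => rfl⟩

/-- Proposition 5.8: if `(X,q)` is a mobi space over `A`, `h : X → S` is onto, and
`s : S → X`, `θ : S × S → X` satisfy the five listed conditions, then
`q_S(u,a,v) = h(q(s(u),a,θ(u,v)))` makes `S` an `A`-mobi space. -/
theorem identification_mobiSpace {A X S : Type*} (M : MobiAlgebra A) (Q : MobiSpace M X)
    (h : X → S) (hsurj : Function.Surjective h)
    (s : S → X) (θ : S → S → X)
    (h1 : ∀ u : S, h (s u) = u)
    (h2 : ∀ u v : S, h (θ u v) = v)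
    (h3 : ∀ u : S, θ u u = s u)
    (h4 : ∀ u v v' : S,
      h (Q.q (s u) M.eh (θ u v)) = h (Q.q (s u) M.eh (θ u v')) → v = v')
    (h5 : ∀ u v : S, ∀ a₁ a₂ a₃ : A,
      h (Q.q (s u) (M.p a₁ a₂ a₃) (θ u v)) =
        h (Q.q (s (h (Q.q (s u) a₁ (θ u v)))) a₂
            (θ (h (Q.q (s u) a₁ (θ u v))) (h (Q.q (s u) a₃ (θ u v)))))) :
    ∃ QS : MobiSpace M S,
      ∀ (u : S) (a : A) (v : S), QS.q u a v = h (Q.q (s u) a (θ u v)) :=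
  identification_mobiSpace_general M Q h s θ h1 h2 h3 h4 h5
end

section
/- Let A be a unitary ring in which 1+1 is invertible with inverse ½, and let X be an A-module. Then the system (A,p,0,½,1) with p(a,b,c) = a + bc - ba is a mobi algebra, and (X,q) with q(x,a,y) = (1-a)·x + a·y is an affine A-mobi space; that is, q satisfies axioms (X1)–(X5) together with the affine identity q(q(x₁,a,y₁),½,q(x₂,a,y₂)) = q(q(x₁,½,x₂),a,q(y₁,½,y₂)) for all x₁,x₂,y₁,y₂ ∈ X and a ∈ A. -/
/-!
In a ring, an element `h` with `h + h = 1` is the inverse of `1 + 1`, which is central; hence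
`h` is central and cancellable. With these two facts every axiom becomes a polynomial identity
in the noncommutative ring `A` (resp. in the module `X`): centrality of `h` is what (A8) and the
affine identity need, cancellability is what (A6) and (X4) need.
-/

namespace MobiAlgebra

variable {A : Type*} [Ring A] {h : A}

def unitTwoOfAddSelfEqOne (hh : h + h = 1) : Aˣ :=
  ⟨1 + 1, h, by rw [add_mul, one_mul, hh], by rw [mul_add, mul_one, hh]⟩

theorem commute_of_add_self_eq_one (hh : h + h = 1) (a : A) : Commute h a :=
  Commute.units_inv_left (u := unitTwoOfAddSelfEqOne hh)
    ((Commute.one_left a).add_left (Commute.one_left a))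

theorem mul_left_cancel_of_add_self_eq_one (hh : h + h = 1) {a b : A} (hab : h * a = h * b) :
    a = b :=
  (Units.mul_right_inj (unitTwoOfAddSelfEqOne hh)⁻¹).mp hab

theorem smul_left_cancel_of_add_self_eq_one {X : Type*} [AddCommGroup X] [Module A X]
    (hh : h + h = 1) {x y : X} (hxy : h • x = h • y) : x = y :=
  (smul_left_cancel_iff (unitTwoOfAddSelfEqOne hh)⁻¹).mp hxy

def ofRing (h : A) (hh : h + h = 1) : MobiAlgebra A where
  p a b c := a + b * c - b * a
  e0 := 0
  eh := h
  e1 := 1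
  ax1 := by simpa [sub_eq_iff_eq_add] using hh.symm
  ax2 a := by simp
  ax3 a b := by simp
  ax4 a b := by simp
  ax5 a b := by simp
  ax6 a b₁ b₂ hb := mul_left_cancel_of_add_self_eq_one hh (by simpa using hb)
  ax7 a b c₁ c₂ c₃ := by noncomm_ring
  ax8 a₁ a₂ b₁ b₂ c := by
    have hc : ∀ d x : A, d * (h * x) = h * (d * x) := fun d x =>
      (commute_of_add_self_eq_one hh d).symm.left_comm x
    simp only [mul_add, mul_sub, hc]
    abel

end MobiAlgebra

namespace MobiSpace

variable {A X : Type*} [Ring A] [AddCommGroup X] [Module A X] {h : A}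

def ofModule (h : A) (hh : h + h = 1) : MobiSpace (MobiAlgebra.ofRing h hh) X where
  q x a y := (1 - a) • x + a • y
  sx1 x y := by simp [MobiAlgebra.ofRing]
  sx2 x y := by simp [MobiAlgebra.ofRing]
  sx3 x a := by rw [← add_smul, sub_add_cancel, one_smul]
  sx4 x y₁ y₂ hy := MobiAlgebra.smul_left_cancel_of_add_self_eq_one hh (add_left_cancel hy)
  sx5 x y a b c := by
    simp only [MobiAlgebra.ofRing, sub_smul, one_smul, smul_add, smul_sub, add_smul, mul_smul]
    abel

theorem ofModule_affine (hh : h + h = 1) (x₁ x₂ y₁ y₂ : X) (a : A) :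
    let Q := ofModule (X := X) h hh
    Q.q (Q.q x₁ a y₁) h (Q.q x₂ a y₂) = Q.q (Q.q x₁ h x₂) a (Q.q y₁ h y₂) := by
  have hc : ∀ (d : A) (x : X), d • h • x = h • d • x := fun d x => by
    rw [← mul_smul, ← (MobiAlgebra.commute_of_add_self_eq_one hh d).eq, mul_smul]
  simp only [ofModule, sub_smul, one_smul, smul_add, smul_sub, hc]
  abel

end MobiSpace

/-- Theorem 6.1: if `A` is a unitary ring in which `1+1` is invertible with
inverse `½`, and `X` is an `A`-module, then `(A, p, 0, ½, 1)` with `p(a,b,c) = a + bc - ba` is a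
mobi algebra and `q(x,a,y) = (1-a)·x + a·y` makes `X` an affine `A`-mobi space. -/
theorem module_affineMobiSpace {A X : Type*} [Ring A] [AddCommGroup X] [Module A X]
    (half : A) (hhalf : (1 + 1) * half = 1 ∧ half * (1 + 1) = 1) :
    ∃ M : MobiAlgebra A, ∃ Q : MobiSpace M X,
      (∀ a b c : A, M.p a b c = a + b * c - b * a) ∧
      M.e0 = 0 ∧ M.eh = half ∧ M.e1 = 1 ∧
      (∀ (x : X) (a : A) (y : X), Q.q x a y = (1 - a) • x + a • y) ∧
      (∀ (x₁ x₂ y₁ y₂ : X) (a : A),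
        Q.q (Q.q x₁ a y₁) M.eh (Q.q x₂ a y₂) =
          Q.q (Q.q x₁ M.eh x₂) a (Q.q y₁ M.eh y₂)) := by
  have hh : half + half = 1 := by simpa [add_mul] using hhalf.1
  exact ⟨MobiAlgebra.ofRing half hh, MobiSpace.ofModule half hh, fun _ _ _ => rfl, rfl, rfl,
    rfl, fun _ _ _ => rfl, MobiSpace.ofModule_affine hh⟩
end

section
/- Let A be a unitary ring in which 2 = 1+1 is invertible with inverse ½, and let (X,+,e,φ) be an A-module (φ_a(x) denoting the scalar action a·x). Form the mobi space (X,q) with q(x,a,y) = φ_{1-a}(x) + φ_a(y). Then the module structure recovered from (X,q) with base point e, namely x +' y = q(e,2,q(x,½,y)) and φ'_a(x) = q(e,a,x), coincides with the original one: x +' y = x + y and φ'_a(x) = φ_a(x) for all x,y ∈ X and a ∈ A. -/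
theorem one_add_one_mul_one_sub_of_mul_eq_one {A : Type*} [Ring A] {h : A}
    (hh : (1 + 1) * h = 1) : (1 + 1) * (1 - h) = 1 := by
  rw [mul_sub, hh, mul_one, add_sub_cancel_right]

theorem one_add_one_smul_one_sub_smul_add_smul {A X : Type*} [Ring A] [AddCommGroup X]
    [Module A X] {h : A} (hh : (1 + 1) * h = 1) (x y : X) :
    (1 + 1 : A) • ((1 - h) • x + h • y) = x + y := by
  rw [smul_add, smul_smul, smul_smul, one_add_one_mul_one_sub_of_mul_eq_one hh, hh,
    one_smul, one_smul]

/-- Proposition 6.3: let `A` be a unitary ring in which `2 = 1 + 1` is invertible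
with inverse `½`, and let `X` be an `A`-module (with zero element `e = 0` and scalar action
`φ_a(x) = a • x`).  Form the mobi space operation `q(x,a,y) = φ_{1-a}(x) + φ_a(y)`.  Then the
module structure recovered from `(X,q)` with base point `e`, namely
`x +' y = q(e, 2, q(x, ½, y))` and `φ'_a(x) = q(e, a, x)`, coincides with the original one. -/
theorem module_roundtrip {A X : Type*} [Ring A] [AddCommGroup X] [Module A X]
    (half : A) (hhalf : (1 + 1) * half = 1 ∧ half * (1 + 1) = 1)
    (q : X → A → X → X) (hq : ∀ (x : X) (a : A) (y : X), q x a y = (1 - a) • x + a • y) :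
    (∀ x y : X, q 0 (1 + 1) (q x half y) = x + y) ∧
    (∀ (a : A) (x : X), q 0 a x = a • x) := by
  have q_zero_left : ∀ (a : A) (x : X), q 0 a x = a • x := fun a x => by
    rw [hq, smul_zero, zero_add]
  refine ⟨fun x y => ?_, q_zero_left⟩
  rw [q_zero_left, hq, one_add_one_smul_one_sub_smul_add_smul hhalf.1]
end

section
/- Let (A,p,0,½,1) be a mobi algebra containing an element 2 with p(0,½,2) = 1, let (X,q) be an affine A-mobi space, and fix e ∈ X. Define on X the operations x ⊞ y = q(e,2,q(x,½,y)) and φ_a(x) = q(e,a,x), and set ā = p(1,a,0). Then the mobi space operation reconstructed from this module structure coincides with the original one: q'(x,a,y) := φ_{ā}(x) ⊞ φ_a(y) satisfies q'(x,a,y) = q(x,a,y) for all x,y ∈ X and a ∈ A. -/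
/-!
Axiom (X5) with `ā = p(1, a, 0)` gives `q(x, ā, y) = q(y, a, x)`, so by (A1) the midpoint
`q(x, ½, y)` is symmetric. Hence `φ_ā(x) ⊞ φ_a(y)` is `q(e, 2, ·)`
applied to `q(q(x, a, e), ½, q(e, a, y))`, which affinity rewrites to `q(e, ½, q(x, a, y))`;
finally `q(e, 2, ·)` undoes `q(e, ½, ·)` because `p(0, ½, 2) = 1`.
-/

namespace MobiSpace

variable {A X : Type*} {M : MobiAlgebra A} (Q : MobiSpace M X)

def IsAffine : Prop :=
  ∀ (x₁ x₂ y₁ y₂ : X) (a : A),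
    Q.q (Q.q x₁ a y₁) M.eh (Q.q x₂ a y₂) = Q.q (Q.q x₁ M.eh x₂) a (Q.q y₁ M.eh y₂)

theorem q_bar (x y : X) (a : A) : Q.q x (M.p M.e1 a M.e0) y = Q.q y a x := by
  rw [← Q.sx5, Q.sx1, Q.sx2]

theorem q_half_comm (x y : X) : Q.q x M.eh y = Q.q y M.eh x := by
  rw [← Q.q_bar, M.ax1]

theorem q_two_q_half {two : A} (htwo : M.p M.e0 M.eh two = M.e1) (e z : X) :
    Q.q e two (Q.q e M.eh z) = z := by
  apply Q.sx4 e
  calc Q.q e M.eh (Q.q e two (Q.q e M.eh z))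
      = Q.q (Q.q e M.e0 (Q.q e M.eh z)) M.eh (Q.q e two (Q.q e M.eh z)) := by rw [Q.sx1]
    _ = Q.q e M.eh z := by rw [Q.sx5, htwo, Q.sx2]

theorem IsAffine.q_half_q {Q : MobiSpace M X} (hQ : Q.IsAffine) (e x y : X) (a : A) :
    Q.q e M.eh (Q.q x a y) = Q.q (Q.q e M.eh x) a (Q.q e M.eh y) := by
  rw [← hQ, Q.sx3]

end MobiSpace

/-- Proposition 6.4: if the mobi algebra `A` contains `2` with `p(0,½,2) = 1` and
`(X,q)` is an affine `A`-mobi space with a chosen `e ∈ X`, then with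
`x ⊞ y = q(e,2,q(x,½,y))`, `φ_a(x) = q(e,a,x)` and `ā = p(1,a,0)`, the reconstructed operation
`q'(x,a,y) = φ_{ā}(x) ⊞ φ_a(y)` coincides with `q`. -/
theorem affineMobiSpace_roundtrip {A X : Type*} (M : MobiAlgebra A) (Q : MobiSpace M X)
    (haffine : ∀ (x₁ x₂ y₁ y₂ : X) (a : A),
      Q.q (Q.q x₁ a y₁) M.eh (Q.q x₂ a y₂) = Q.q (Q.q x₁ M.eh x₂) a (Q.q y₁ M.eh y₂))
    (two : A) (htwo : M.p M.e0 M.eh two = M.e1)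
    (e : X)
    (xadd : X → X → X) (hxadd : ∀ x y, xadd x y = Q.q e two (Q.q x M.eh y))
    (φ : A → X → X) (hφ : ∀ a x, φ a x = Q.q e a x)
    (q' : X → A → X → X)
    (hq' : ∀ (x : X) (a : A) (y : X), q' x a y = xadd (φ (M.p M.e1 a M.e0) x) (φ a y)) :
    ∀ (x : X) (a : A) (y : X), q' x a y = Q.q x a y := by
  have hQ : Q.IsAffine := haffine
  intro x a y
  calc q' x a y = Q.q e two (Q.q (Q.q x a e) M.eh (Q.q e a y)) := by
        rw [hq', hxadd, hφ, hφ, Q.q_bar]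
    _ = Q.q e two (Q.q e M.eh (Q.q x a y)) := by
        rw [hQ, Q.q_half_comm x e, hQ.q_half_q]
    _ = Q.q x a y := Q.q_two_q_half htwo e _
end
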